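/- arXiv:1308.4650 — 4 statements merged into one kernel-verified Lean document; each statement's English description precedes it below -/
import Mathlib

section
/- Let A be a D-based quasivariety whose members have the form A = (A, ∧, ∨, 0, 1, {f_i : i in I}) where I is a finite set and each f_i is a lattice endomorphism or a dual lattice endomorphism of U(A). Then for any A in A and any bounded sublattice L of U(A), either L contains no subalgebra of A, or the set {B in S(A) : B ⊆ L}, ordered by inclusion, has a top element. Moreover, if each f_i preserves the bounds 0 and 1, then {B in S(A) : B ⊆ L} is non-empty and so has a top element. -/
namespace CoproductsPaper

variable {A : Type} [DistribLattice A] [BoundedOrder A]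

/-- `g` is a lattice endomorphism of the lattice reduct of `A`. -/
def IsLatticeEndo (g : A → A) : Prop :=
  (∀ a b : A, g (a ⊓ b) = g a ⊓ g b) ∧ (∀ a b : A, g (a ⊔ b) = g a ⊔ g b)

/-- `g` is a dual lattice endomorphism of the lattice reduct of `A`. -/
def IsDualLatticeEndo (g : A → A) : Prop :=
  (∀ a b : A, g (a ⊓ b) = g a ⊔ g b) ∧ (∀ a b : A, g (a ⊔ b) = g a ⊓ g b)

/-- `B` is (the universe of) a subalgebra of the algebra
`(A, ∧, ∨, 0, 1, {f_i : i ∈ I})`: a subset closed under all the operations. -/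
def IsSubalgebra {I : Type} (f : I → A → A) (B : Set A) : Prop :=
  (∀ a ∈ B, ∀ b ∈ B, a ⊓ b ∈ B) ∧ (∀ a ∈ B, ∀ b ∈ B, a ⊔ b ∈ B) ∧
    (⊥ : A) ∈ B ∧ (⊤ : A) ∈ B ∧ ∀ (i : I), ∀ a ∈ B, f i a ∈ B

/-- `Ls` is a bounded sublattice of (the lattice reduct of) `A`. -/
def IsBddSublattice (Ls : Set A) : Prop :=
  (∀ a ∈ Ls, ∀ b ∈ Ls, a ⊓ b ∈ Ls) ∧ (∀ a ∈ Ls, ∀ b ∈ Ls, a ⊔ b ∈ Ls) ∧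
    (⊥ : A) ∈ Ls ∧ (⊤ : A) ∈ Ls

/-- Let `A` be a `D`-based quasivariety whose members have the form
`A = (A, ∧, ∨, 0, 1, {f_i : i ∈ I})`, where `I` is a finite set and each `f_i` is a
lattice endomorphism or a dual lattice endomorphism of `U(A)`.  Then for any `A ∈ A`
and any bounded sublattice `L` of `U(A)`, either `L` contains no subalgebra of `A`, or
the set `{B ∈ S(A) : B ⊆ L}`, ordered by inclusion, has a top element.  Moreover, if
each `f_i` preserves the bounds `0` and `1`, then `{B ∈ S(A) : B ⊆ L}` is non-empty
and so has a top element. -/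
theorem max_subalgebra_in_bounded_sublattice
    (A : Type) [DistribLattice A] [BoundedOrder A]
    (I : Type) [Finite I] (f : I → A → A)
    (hf : ∀ i, IsLatticeEndo (f i) ∨ IsDualLatticeEndo (f i))
    (Ls : Set A) (hLs : IsBddSublattice Ls) :
    ((∀ B : Set A, IsSubalgebra f B → ¬ B ⊆ Ls) ∨
      (∃ B : Set A, IsSubalgebra f B ∧ B ⊆ Ls ∧
        ∀ B' : Set A, IsSubalgebra f B' → B' ⊆ Ls → B' ⊆ B)) ∧
    ((∀ i, (f i ⊥ = (⊥ : A) ∧ f i ⊤ = (⊤ : A)) ∨ (f i ⊥ = (⊤ : A) ∧ f i ⊤ = (⊥ : A))) →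
      (∃ B : Set A, IsSubalgebra f B ∧ B ⊆ Ls) ∧
      (∃ B : Set A, IsSubalgebra f B ∧ B ⊆ Ls ∧
        ∀ B' : Set A, IsSubalgebra f B' → B' ⊆ Ls → B' ⊆ B)) := by
  classical
  -- app l a : apply the word l of operations to a
  let app : List I → A → A := fun l a => l.foldl (fun x i => f i x) a
  have app_nil : ∀ a, app [] a = a := fun a => rfl
  have app_cons : ∀ i l a, app (i :: l) a = app l (f i a) := fun i l a => rfl
  -- each word is a lattice endo or dual lattice endo
  have hword : ∀ l : List I, IsLatticeEndo (app l) ∨ IsDualLatticeEndo (app l) := by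
    intro l
    induction l with
    | nil => exact Or.inl ⟨fun a b => rfl, fun a b => rfl⟩
    | cons i l ih =>
      rcases hf i with hi | hi <;> rcases ih with hl | hl
      · exact Or.inl ⟨fun a b => by rw [app_cons, hi.1, hl.1, app_cons, app_cons],
          fun a b => by rw [app_cons, hi.2, hl.2, app_cons, app_cons]⟩
      · exact Or.inr ⟨fun a b => by rw [app_cons, hi.1, hl.1, app_cons, app_cons],
          fun a b => by rw [app_cons, hi.2, hl.2, app_cons, app_cons]⟩
      · exact Or.inr ⟨fun a b => by rw [app_cons, hi.1, hl.2, app_cons, app_cons],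
          fun a b => by rw [app_cons, hi.2, hl.1, app_cons, app_cons]⟩
      · exact Or.inl ⟨fun a b => by rw [app_cons, hi.1, hl.2, app_cons, app_cons],
          fun a b => by rw [app_cons, hi.2, hl.1, app_cons, app_cons]⟩
  obtain ⟨hmeet, hjoin, hbot, htop⟩ := hLs
  -- M : the largest subset of Ls closed under all f i
  let M : Set A := {a | ∀ l : List I, app l a ∈ Ls}
  have hMsub : M ⊆ Ls := fun a ha => ha []
  have hMmeet : ∀ a ∈ M, ∀ b ∈ M, a ⊓ b ∈ M := by
    intro a ha b hb l
    rcases hword l with h | h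
    · rw [h.1]; exact hmeet _ (ha l) _ (hb l)
    · rw [h.1]; exact hjoin _ (ha l) _ (hb l)
  have hMjoin : ∀ a ∈ M, ∀ b ∈ M, a ⊔ b ∈ M := by
    intro a ha b hb l
    rcases hword l with h | h
    · rw [h.2]; exact hjoin _ (ha l) _ (hb l)
    · rw [h.2]; exact hmeet _ (ha l) _ (hb l)
  have hMf : ∀ i : I, ∀ a ∈ M, f i a ∈ M := by
    intro i a ha l
    rw [← app_cons]; exact ha (i :: l)
  -- any subalgebra contained in Ls is contained in M
  have hBM : ∀ B : Set A, IsSubalgebra f B → B ⊆ Ls → B ⊆ M := by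
    intro B hB hBL
    have key : ∀ (l : List I), ∀ a ∈ B, app l a ∈ Ls := by
      intro l
      induction l with
      | nil => exact fun a ha => hBL ha
      | cons i l ih => exact fun a ha => ih _ (hB.2.2.2.2 i a ha)
    exact fun a ha l => key l a ha
  have main : ∀ B : Set A, IsSubalgebra f B → B ⊆ Ls →
      (∃ B : Set A, IsSubalgebra f B ∧ B ⊆ Ls ∧
        ∀ B' : Set A, IsSubalgebra f B' → B' ⊆ Ls → B' ⊆ B) := by
    intro B hB hBL
    refine ⟨M, ⟨hMmeet, hMjoin, hBM B hB hBL hB.2.2.1, hBM B hB hBL hB.2.2.2.1, hMf⟩,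
      hMsub, fun B' hB' hB'L => hBM B' hB' hB'L⟩
  constructor
  · by_cases h : ∃ B : Set A, IsSubalgebra f B ∧ B ⊆ Ls
    · obtain ⟨B, hB, hBL⟩ := h
      exact Or.inr (main B hB hBL)
    · exact Or.inl (fun B hB hBL => h ⟨B, hB, hBL⟩)
  · intro hbounds
    have hBsub : IsSubalgebra f ({⊥, ⊤} : Set A) := by
      refine ⟨?_, ?_, Or.inl rfl, Or.inr rfl, ?_⟩
      · rintro a (rfl | rfl) b (rfl | rfl) <;> simp
      · rintro a (rfl | rfl) b (rfl | rfl) <;> simp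
      · intro i a ha
        rcases hbounds i with ⟨h1, h2⟩ | ⟨h1, h2⟩ <;> rcases ha with rfl | rfl <;>
          simp [h1, h2]
    have hBL : ({⊥, ⊤} : Set A) ⊆ Ls := by rintro a (rfl | rfl); exacts [hbot, htop]
    exact ⟨⟨_, hBsub, hBL⟩, main _ hBsub hBL⟩

end CoproductsPaper
end

section
/- Let A and C be prevarieties such that the variety V(A) generated by A is C-based. Then the following are equivalent: (1) U_{A,C} satisfies (S); (2) U_{B,C} satisfies (S) for each prevariety B with ISP(Free_A(ℵ_0)) ⊆ B ⊆ V(A). -/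
open FirstOrder FirstOrder.Language FirstOrder.Language.Structure

namespace CoproductsPaper

/-- Pointwise structure on a product of `L`-structures. -/
instance piStructure {L : FirstOrder.Language.{0,0}} {ι : Type} (M : ι → Type)
    [∀ i, L.Structure (M i)] : L.Structure (∀ i, M i) where
  funMap f x i := funMap f fun j => x j i
  RelMap r x := ∀ i, RelMap r fun j => x j i

/-- A class of `L`-structures. -/
abbrev ClassOf (L : FirstOrder.Language.{0,0}) : Type 1 :=
  (X : Type) → L.Structure X → Prop

variable {L L' : FirstOrder.Language.{0,0}}

/-- A homomorphism of algebras (structures for an algebraic language), with the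
structures given explicitly. -/
def IsAlgHomOn {X Y : Type} (iX : L.Structure X) (iY : L.Structure Y)
    (f : X → Y) : Prop :=
  ∀ {n : ℕ} (g : L.Functions n) (v : Fin n → X),
    f (@funMap L X iX n g v) = @funMap L Y iY n g (f ∘ v)

/-- An interpretation of the language `L'` (thought of as a set `T` of `L`-terms,
regarded as a language) inside the language `L`: each `n`-ary function symbol of `L'`
is interpreted by an `L`-term in `n` variables. -/
structure TermTranslation (L L' : FirstOrder.Language.{0,0}) : Type where
  onFun : ∀ {n : ℕ}, L'.Functions n → L.Term (Fin n)

/-- The `T`-term-reduct of an `L`-structure `X`, an `L'`-structure on `X`. -/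
def reduct [L'.IsAlgebraic] (T : TermTranslation L L') (X : Type)
    (iX : L.Structure X) : L'.Structure X where
  funMap {n} f v := @FirstOrder.Language.Term.realize L X iX (Fin n) v (T.onFun f)
  RelMap {n} r _ := isEmptyElim r

/-- `Acl` is `C`-based via the term translation `T`: the `T`-reduct of every member of
`Acl` belongs to `Ccl`. -/
def CBased [L'.IsAlgebraic] (T : TermTranslation L L') (Acl : ClassOf L)
    (Ccl : ClassOf L') : Prop :=
  ∀ (X : Type) (iX : L.Structure X), Acl X iX → Ccl X (reduct T X iX)

/-- `(C, ε)` is a coproduct co-cone for the family `K` within the class `Acl`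
(unbundled form). -/
def IsCoprodB (Acl : ClassOf L) {κ : Type} (K : κ → Type) (iK : ∀ k, L.Structure (K k))
    (C : Type) (iC : L.Structure C) (ε : ∀ k, K k → C) : Prop :=
  Acl C iC ∧ (∀ k, IsAlgHomOn (iK k) iC (ε k)) ∧
  ∀ (B : Type) (iB : L.Structure B), Acl B iB → ∀ f : ∀ k, K k → B,
    (∀ k, IsAlgHomOn (iK k) iB (f k)) →
      ∃! h : C → B, IsAlgHomOn iC iB h ∧ ∀ k, h ∘ ε k = f k

/-- `F` is free over the class `Acl` on the generators `gen : G → F`. -/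
def IsFreeOverB (Acl : ClassOf L) (G : Type) (F : Type) (iF : L.Structure F)
    (gen : G → F) : Prop :=
  Acl F iF ∧ ∀ (B : Type) (iB : L.Structure B), Acl B iB → ∀ v : G → B,
    ∃! h : F → B, IsAlgHomOn iF iB h ∧ ∀ x : G, h (gen x) = v x

/-- The class `Acl` is closed under isomorphic copies. -/
def ClosedUnderI (Acl : ClassOf L) : Prop :=
  ∀ (X : Type) (iX : L.Structure X) (Y : Type) (iY : L.Structure Y), Acl X iX →
    ∀ e : X → Y, IsAlgHomOn iX iY e → Function.Bijective e → Acl Y iY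

/-- The class `Acl` is closed under subalgebras (realised as injective
homomorphisms). -/
def ClosedUnderS (Acl : ClassOf L) : Prop :=
  ∀ (X : Type) (iX : L.Structure X), Acl X iX →
    ∀ (Y : Type) (iY : L.Structure Y) (e : Y → X),
      IsAlgHomOn iY iX e → Function.Injective e → Acl Y iY

/-- The class `Acl` is closed under (arbitrary) products. -/
def ClosedUnderP (Acl : ClassOf L) : Prop :=
  ∀ (κ : Type) (Mfam : κ → Type) (iM : ∀ k, L.Structure (Mfam k)),
    (∀ k, Acl (Mfam k) (iM k)) →
      Acl (∀ k, Mfam k) (@piStructure L κ Mfam iM)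

/-- `Acl` is a prevariety: a class of algebras closed under `I`, `S` and `P`. -/
def IsPrevariety (Acl : ClassOf L) : Prop :=
  ClosedUnderI Acl ∧ ClosedUnderS Acl ∧ ClosedUnderP Acl

/-- The functor `U_{A,C}` satisfies (S): for every set `K` of algebras in `Acl`, the
canonical comparison `C`-homomorphism `χ_K : ∐_C U(K) → U(∐_A K)` (characterised by
commuting with the coproduct injections) is surjective. -/
def SatisfiesSB [L'.IsAlgebraic] (T : TermTranslation L L') (Acl : ClassOf L)
    (Ccl : ClassOf L') : Prop :=
  ∀ (κ : Type) (K : κ → Type) (iK : ∀ k, L.Structure (K k)),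
    (∀ k, Acl (K k) (iK k)) →
    ∀ (C : Type) (iC : L.Structure C) (ε : ∀ k, K k → C),
      IsCoprodB Acl K iK C iC ε →
    ∀ (P : Type) (iP : L'.Structure P) (η : ∀ k, K k → P),
      IsCoprodB Ccl K (fun k => reduct T (K k) (iK k)) P iP η →
    ∀ χ : P → C, IsAlgHomOn iP (reduct T C iC) χ → (∀ k, χ ∘ η k = ε k) →
      Function.Surjective χ

/-- The functor `U_{A,C}` satisfies (E): every canonical comparison homomorphism
`χ_K` is injective. -/
def SatisfiesEB [L'.IsAlgebraic] (T : TermTranslation L L') (Acl : ClassOf L)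
    (Ccl : ClassOf L') : Prop :=
  ∀ (κ : Type) (K : κ → Type) (iK : ∀ k, L.Structure (K k)),
    (∀ k, Acl (K k) (iK k)) →
    ∀ (C : Type) (iC : L.Structure C) (ε : ∀ k, K k → C),
      IsCoprodB Acl K iK C iC ε →
    ∀ (P : Type) (iP : L'.Structure P) (η : ∀ k, K k → P),
      IsCoprodB Ccl K (fun k => reduct T (K k) (iK k)) P iP η →
    ∀ χ : P → C, IsAlgHomOn iP (reduct T C iC) χ → (∀ k, χ ∘ η k = ε k) →
      Function.Injective χ

/-- Membership in the variety `V(Acl) = HSP(Acl)` generated by `Acl`:  homomorphic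
images of subalgebras of products of members of `Acl`. -/
def InHSP (Acl : ClassOf L) : ClassOf L :=
  fun X iX =>
    ∃ (κ : Type) (Mfam : κ → Type) (iM : ∀ k, L.Structure (Mfam k)),
      (∀ k, Acl (Mfam k) (iM k)) ∧
      ∃ (D : Type) (iD : L.Structure D) (e : D → ∀ k, Mfam k) (f : D → X),
        IsAlgHomOn iD (@piStructure L κ Mfam iM) e ∧ Function.Injective e ∧
        IsAlgHomOn iD iX f ∧ Function.Surjective f

/-- Membership in `ISP(M)` for a single algebra `M`: structures embeddable in a power
of `M`. -/
def ISPb1 (M : Type) (iM : L.Structure M) : ClassOf L :=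
  fun X iX =>
    ∃ (κ : Type) (e : X → (κ → M)),
      IsAlgHomOn iX (@piStructure L κ (fun _ => M) (fun _ => iM)) e ∧
        Function.Injective e


/-!
Let `F₁` and `Fₐ` be the free `A`-algebras on one generator and on a set `α`. Then `Fₐ` is the
`A`-coproduct of `α` copies of `F₁`, so (S) makes the comparison map onto `U(Fₐ)` surjective;
since a `C`-coproduct is generated by its injections, every element of `Fₐ` is a `T`-term in
elements `u(xᵢ)` with `u` a unary `L`-term. A `B`-coproduct `∐ K` lies in `V(A)` and is generated
by the images of the `K k`, so its elements are values of `L`-terms `t` at those images; pushing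
the decomposition of `t` from `Fₐ` into `∐ K` along a homomorphism writes each element as a
`T`-term in elements of the `K k`, which lies in the image of the comparison map.
-/

namespace IsAlgHomOn

variable {X Y Z : Type} {iX : L.Structure X} {iY : L.Structure Y} {iZ : L.Structure Z}

theorem id (iX : L.Structure X) : IsAlgHomOn iX iX id := fun _ _ => rfl

theorem comp {g : Y → Z} {f : X → Y} (hg : IsAlgHomOn iY iZ g) (hf : IsAlgHomOn iX iY f) :
    IsAlgHomOn iX iZ (g ∘ f) := fun u v => by
  rw [Function.comp_apply, hf u, hg u]
  rfl

theorem realize_term {f : X → Y} (hf : IsAlgHomOn iX iY f) {α : Type} (v : α → X)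
    (t : L.Term α) : f (@Term.realize _ _ iX _ v t) = @Term.realize _ _ iY _ (f ∘ v) t := by
  induction t with
  | var => rfl
  | func g ts ih => exact (hf g _).trans (congrArg _ (funext ih))

theorem reduct [L'.IsAlgebraic] (T : TermTranslation L L') {f : X → Y}
    (hf : IsAlgHomOn iX iY f) : IsAlgHomOn (reduct T X iX) (reduct T Y iY) f :=
  fun g v => hf.realize_term v (T.onFun g)

theorem eq_of_comp_eq {G : Type} {gen : G → X}
    (hgen : ∀ x, ∃ t : L.Term G, x = @Term.realize _ _ iX _ gen t) {h h' : X → Y}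
    (hh : IsAlgHomOn iX iY h) (hh' : IsAlgHomOn iX iY h') (heq : h ∘ gen = h' ∘ gen) :
    h = h' := by
  funext x
  obtain ⟨t, rfl⟩ := hgen x
  rw [hh.realize_term, hh'.realize_term, heq]

end IsAlgHomOn

theorem mem_InHSP {Acl : ClassOf L} {X : Type} {iX : L.Structure X} (h : Acl X iX) :
    InHSP Acl X iX :=
  ⟨Unit, fun _ => X, fun _ => iX, fun _ => h, X, iX, fun x _ => x, id,
    fun _ _ => rfl, fun _ _ hab => congrFun hab (), fun _ _ => rfl, fun x => ⟨x, rfl⟩⟩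

theorem ISPb1.mem {Acl : ClassOf L} (hS : ClosedUnderS Acl) (hP : ClosedUnderP Acl)
    {F : Type} {iF : L.Structure F} (hF : Acl F iF) {X : Type} {iX : L.Structure X} :
    ISPb1 F iF X iX → Acl X iX
  | ⟨κ, e, he, hinj⟩ => hS _ _ (hP κ _ _ fun _ => hF) X iX e he hinj

theorem IsFreeOverB.exists_hom_of_InHSP {Acl : ClassOf L} (hS : ClosedUnderS Acl)
    (hP : ClosedUnderP Acl) {G F : Type} {iF : L.Structure F} {gen : G → F}
    (hF : IsFreeOverB Acl G F iF gen) {X : Type} {iX : L.Structure X} (hX : InHSP Acl X iX)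
    (x : G → X) : ∃ h : F → X, IsAlgHomOn iF iX h ∧ h ∘ gen = x := by
  obtain ⟨κ, M, iM, hM, D, iD, e, f, he, hinj, hf, hsurj⟩ := hX
  have hD : Acl D iD := hS _ _ (hP κ M iM hM) D iD e he hinj
  obtain ⟨h, ⟨hh, hgen⟩, -⟩ := hF.2 D iD hD (Function.surjInv hsurj ∘ x)
  refine ⟨f ∘ h, hf.comp hh, funext fun g => ?_⟩
  simp only [Function.comp_apply, hgen, Function.surjInv_eq hsurj]

section Presentation

variable (D : ClassOf L) {G : Type} (E : Set (L.Term G × L.Term G))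

def SatisfiesEqns {B : Type} (iB : L.Structure B) (v : G → B) : Prop :=
  ∀ e ∈ E, @Term.realize _ _ iB _ v e.1 = @Term.realize _ _ iB _ v e.2

structure ModelOf : Type 1 where
  carrier : Type
  str : L.Structure carrier
  mem : D carrier str
  val : G → carrier
  sat : SatisfiesEqns E str val

variable {D E}

def ModelOf.ker (m : ModelOf D E) : L.Term G → L.Term G → Prop :=
  fun t t' => @Term.realize _ _ m.str _ m.val t = @Term.realize _ _ m.str _ m.val t'

variable (D E)

/-- Models have a proper class of carriers but only a set of kernels, so these index a product
in which every model is represented up to kernel; the presented algebra is the image of the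
terms in that product. -/
structure KernelIdx : Type where
  ker : L.Term G → L.Term G → Prop
  exists_model : ∃ m : ModelOf D E, m.ker = ker

variable {D E}

noncomputable def KernelIdx.model (i : KernelIdx D E) : ModelOf D E :=
  i.exists_model.choose

variable (D E)

@[reducible] noncomputable def KernelIdx.prodStr :
    L.Structure (∀ i : KernelIdx D E, i.model.carrier) :=
  @piStructure L _ _ fun i => i.model.str

noncomputable def evalAll (t : L.Term G) (i : KernelIdx D E) : i.model.carrier :=
  @Term.realize _ _ i.model.str _ i.model.val t

theorem evalAll_func {n : ℕ} (f : L.Functions n) (ts : Fin n → L.Term G) :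
    evalAll D E (Term.func f ts) = @funMap _ _ (KernelIdx.prodStr D E) n f (evalAll D E ∘ ts) :=
  rfl

theorem realize_eq_of_evalAll_eq (m : ModelOf D E) {t t' : L.Term G}
    (h : evalAll D E t = evalAll D E t') :
    @Term.realize _ _ m.str _ m.val t = @Term.realize _ _ m.str _ m.val t' := by
  let i : KernelIdx D E := ⟨m.ker, m, rfl⟩
  have hi : i.model.ker t t' := congrFun h i
  have hker : i.model.ker = m.ker := i.exists_model.choose_spec
  rwa [hker] at hi

def Presented : Type :=
  {x : ∀ i : KernelIdx D E, i.model.carrier // ∃ t, evalAll D E t = x}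

namespace Presented

@[reducible] noncomputable def str : L.Structure (Presented D E) where
  funMap {n} f w := ⟨@funMap _ _ (KernelIdx.prodStr D E) n f fun j => (w j).1, by
    choose t ht using fun j => (w j).2
    exact ⟨Term.func f t, by rw [evalAll_func]; exact congrArg _ (funext ht)⟩⟩
  RelMap {n} r w := @RelMap _ _ (KernelIdx.prodStr D E) n r fun j => (w j).1

noncomputable def gen (g : G) : Presented D E :=
  ⟨evalAll D E (Term.var g), _, rfl⟩

theorem val_realize_gen (t : L.Term G) :
    (@Term.realize _ _ (str D E) _ (gen D E) t).1 = evalAll D E t := by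
  induction t with
  | var => rfl
  | func f ts ih => exact (congrArg _ (funext ih)).trans (evalAll_func D E f ts).symm

theorem exists_term (x : Presented D E) :
    ∃ t : L.Term G, x = @Term.realize _ _ (str D E) _ (gen D E) t :=
  let ⟨t, ht⟩ := x.2
  ⟨t, Subtype.ext (ht.symm.trans (val_realize_gen D E t).symm)⟩

theorem mem (hS : ClosedUnderS D) (hP : ClosedUnderP D) : D (Presented D E) (str D E) :=
  hS _ _ (hP _ _ _ fun i => i.model.mem) _ _ Subtype.val (fun _ _ => rfl) Subtype.val_injective

theorem satisfiesEqns : SatisfiesEqns E (str D E) (gen D E) := fun e he =>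
  Subtype.ext <| by
    rw [val_realize_gen, val_realize_gen]
    funext i
    exact i.model.sat e he

variable {D E}

noncomputable def lift (m : ModelOf D E) (x : Presented D E) : m.carrier :=
  @Term.realize _ _ m.str _ m.val x.2.choose

theorem lift_realize_gen (m : ModelOf D E) (t : L.Term G) :
    lift m (@Term.realize _ _ (str D E) _ (gen D E) t) = @Term.realize _ _ m.str _ m.val t :=
  realize_eq_of_evalAll_eq D E m <|
    (@Term.realize _ _ (str D E) _ (gen D E) t).2.choose_spec.trans (val_realize_gen D E t)

theorem lift_hom (m : ModelOf D E) : IsAlgHomOn (str D E) m.str (lift m) := by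
  intro n f w
  choose t ht using fun j => exists_term D E (w j)
  obtain rfl : w = fun j => @Term.realize _ _ (str D E) _ (gen D E) (t j) := funext ht
  exact lift_realize_gen m (Term.func f t) |>.trans
    (congrArg _ (funext fun j => (lift_realize_gen m (t j)).symm))

theorem existsUnique_hom {B : Type} {iB : L.Structure B} (hB : D B iB) {v : G → B}
    (hv : SatisfiesEqns E iB v) :
    ∃! h : Presented D E → B, IsAlgHomOn (str D E) iB h ∧ ∀ g, h (gen D E g) = v g := by
  let m : ModelOf D E := ⟨B, iB, hB, v, hv⟩
  refine ⟨lift m, ⟨lift_hom m, fun g => lift_realize_gen m (Term.var g)⟩, ?_⟩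
  rintro h ⟨hh, hgen⟩
  exact hh.eq_of_comp_eq (exists_term D E) (lift_hom m) <|
    funext fun g => (hgen g).trans (lift_realize_gen m (Term.var g)).symm

end Presented

end Presentation

theorem exists_isFreeOverB (D : ClassOf L) (hS : ClosedUnderS D) (hP : ClosedUnderP D)
    (G : Type) : ∃ (F : Type) (iF : L.Structure F) (gen : G → F),
      IsFreeOverB D G F iF gen ∧ ∀ x, ∃ t : L.Term G, x = @Term.realize _ _ iF _ gen t :=
  let E : Set (L.Term G × L.Term G) := ∅
  ⟨Presented D E, Presented.str D E, Presented.gen D E,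
    ⟨Presented.mem D E hS hP, fun _ _ hB _ => Presented.existsUnique_hom hB nofun⟩,
    Presented.exists_term D E⟩

section Coproduct

variable {κ : Type} (K : κ → Type) (iK : ∀ k, L.Structure (K k))

def coprodEqns : Set (L.Term (Σ k, K k) × L.Term (Σ k, K k)) :=
  {e | ∃ (k : κ) (n : ℕ) (f : L.Functions n) (a : Fin n → K k),
    e = (Term.var ⟨k, @funMap _ _ (iK k) n f a⟩, Term.func f fun j => Term.var ⟨k, a j⟩)}

theorem satisfiesEqns_coprodEqns_iff {B : Type} {iB : L.Structure B} (w : (Σ k, K k) → B) :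
    SatisfiesEqns (coprodEqns K iK) iB w ↔ ∀ k, IsAlgHomOn (iK k) iB fun a => w ⟨k, a⟩ := by
  constructor
  · intro h k n f a
    exact h _ ⟨k, n, f, a, rfl⟩
  · rintro h _ ⟨k, n, f, a, rfl⟩
    exact h k f a

variable {D : ClassOf L}

theorem exists_isCoprodB (hS : ClosedUnderS D) (hP : ClosedUnderP D) :
    ∃ (C : Type) (iC : L.Structure C) (ε : ∀ k, K k → C), IsCoprodB D K iK C iC ε ∧
      ∀ c, ∃ t : L.Term (Σ k, K k), c = @Term.realize _ _ iC _ (fun p => ε p.1 p.2) t := by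
  let E := coprodEqns K iK
  refine ⟨Presented D E, Presented.str D E, fun k a => Presented.gen D E ⟨k, a⟩,
    ⟨Presented.mem D E hS hP, (satisfiesEqns_coprodEqns_iff K iK _).1 (Presented.satisfiesEqns D E),
      fun B iB hB f hf => ?_⟩, Presented.exists_term D E⟩
  obtain ⟨h, ⟨hh, hgen⟩, huniq⟩ :=
    Presented.existsUnique_hom hB ((satisfiesEqns_coprodEqns_iff K iK fun p => f p.1 p.2).2 hf)
  refine ⟨h, ⟨hh, fun k => funext fun a => hgen ⟨k, a⟩⟩, ?_⟩
  rintro h' ⟨hh', hcomm⟩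
  exact huniq h' ⟨hh', fun p => congrFun (hcomm p.1) p.2⟩

variable {K iK}

/-- A coproduct is isomorphic to the presented one, which is generated by construction. -/
theorem IsCoprodB.exists_term (hS : ClosedUnderS D) (hP : ClosedUnderP D) {C : Type}
    {iC : L.Structure C} {ε : ∀ k, K k → C} (hC : IsCoprodB D K iK C iC ε) (c : C) :
    ∃ t : L.Term (Σ k, K k), c = @Term.realize _ _ iC _ (fun p => ε p.1 p.2) t := by
  obtain ⟨C', iC', ε', hC', hgen'⟩ := exists_isCoprodB K iK hS hP
  obtain ⟨φ, ⟨hφ, hφε⟩, -⟩ := hC'.2.2 C iC hC.1 ε hC.2.1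
  obtain ⟨ψ, ⟨hψ, hψε⟩, -⟩ := hC.2.2 C' iC' hC'.1 ε' hC'.2.1
  have hφψ : φ ∘ ψ = id := (hC.2.2 C iC hC.1 ε hC.2.1).unique
    ⟨hφ.comp hψ, fun k => by rw [Function.comp_assoc, hψε, hφε]⟩ ⟨IsAlgHomOn.id iC, fun _ => rfl⟩
  obtain ⟨t, ht⟩ := hgen' (ψ c)
  refine ⟨t, ?_⟩
  calc c = φ (ψ c) := (congrFun hφψ c).symm
    _ = @Term.realize _ _ iC _ (φ ∘ fun p => ε' p.1 p.2) t := by rw [ht, hφ.realize_term]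
    _ = _ := congrArg (fun v => @Term.realize _ _ iC _ v t) (funext fun p => congrFun (hφε p.1) p.2)

end Coproduct

theorem IsFreeOverB.isCoprodB_of_unit {D : ClassOf L} {F₁ : Type} {iF₁ : L.Structure F₁}
    {g₁ : Unit → F₁} (hF₁ : IsFreeOverB D Unit F₁ iF₁ g₁) {α F : Type} {iF : L.Structure F}
    {gen : α → F} (hF : IsFreeOverB D α F iF gen) {ε : α → F₁ → F}
    (hε : ∀ i, IsAlgHomOn iF₁ iF (ε i)) (hεg : ∀ i, ε i (g₁ ()) = gen i) :
    IsCoprodB D (fun _ => F₁) (fun _ => iF₁) F iF ε := by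
  refine ⟨hF.1, hε, fun B iB hB f hf => ?_⟩
  obtain ⟨h, ⟨hh, hgen⟩, huniq⟩ := hF.2 B iB hB fun i => f i (g₁ ())
  refine ⟨h, ⟨hh, fun i => ?_⟩, fun h' ⟨hh', hcomm⟩ => huniq h' ⟨hh', fun i => ?_⟩⟩
  · exact (hF₁.2 B iB hB fun _ => f i (g₁ ())).unique
      ⟨hh.comp (hε i), fun _ => by rw [Function.comp_apply, hεg, hgen]⟩ ⟨hf i, fun _ => rfl⟩
  · rw [← hεg]
    exact congrFun (hcomm i) (g₁ ())

variable [L'.IsAlgebraic] {T : TermTranslation L L'} {Acl : ClassOf L} {Ccl : ClassOf L'}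

theorem SatisfiesSB.exists_reduct_term (hS : SatisfiesSB T Acl Ccl) (hAS : ClosedUnderS Acl)
    (hAP : ClosedUnderP Acl) (hCS : ClosedUnderS Ccl) (hCP : ClosedUnderP Ccl)
    (hBased : CBased T Acl Ccl) {α Fa : Type} {iFa : L.Structure Fa} {xg : α → Fa}
    (hFa : IsFreeOverB Acl α Fa iFa xg) (y : Fa) :
    ∃ (β : Type) (s : L'.Term β) (ι : β → α) (u : β → L.Term Unit),
      y = @Term.realize _ _ (reduct T Fa iFa) _
        (fun j => @Term.realize _ _ iFa _ (fun _ => xg (ι j)) (u j)) s := by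
  obtain ⟨F₁, iF₁, g₁, hF₁, hF₁gen⟩ := exists_isFreeOverB Acl hAS hAP Unit
  choose ε hε using fun i => (hF₁.2 Fa iFa hFa.1 fun _ => xg i).exists
  have hFaCop := hF₁.isCoprodB_of_unit hFa (fun i => (hε i).1) (fun i => (hε i).2 ())
  obtain ⟨P, iP, η, hP, hPgen⟩ :=
    exists_isCoprodB (fun _ : α => F₁) (fun _ => reduct T F₁ iF₁) hCS hCP
  obtain ⟨χ, ⟨hχ, hχη⟩, -⟩ :=
    hP.2.2 Fa (reduct T Fa iFa) (hBased _ _ hFa.1) ε fun i => IsAlgHomOn.reduct T (hε i).1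
  obtain ⟨p, rfl⟩ := hS α _ _ (fun _ => hF₁.1) Fa iFa ε hFaCop P iP η hP χ hχ hχη y
  obtain ⟨s, rfl⟩ := hPgen p
  choose u hu using hF₁gen
  refine ⟨(_ : α) × F₁, s, Sigma.fst, fun q => u q.2, ?_⟩
  rw [hχ.realize_term]
  refine congrArg (fun v => @Term.realize _ _ (reduct T Fa iFa) _ v s) (funext fun q => ?_)
  calc χ (η q.1 q.2) = ε q.1 q.2 := congrFun (hχη q.1) q.2
    _ = @Term.realize _ _ iFa _ (ε q.1 ∘ g₁) (u q.2) := by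
      rw [← IsAlgHomOn.realize_term (hε q.1).1, ← hu]
    _ = _ := congrArg (fun v => @Term.realize _ _ iFa _ v (u q.2))
      (funext fun _ => (hε q.1).2 ())

theorem SatisfiesSB.of_subset_InHSP (hS : SatisfiesSB T Acl Ccl) (hAS : ClosedUnderS Acl)
    (hAP : ClosedUnderP Acl) (hCS : ClosedUnderS Ccl) (hCP : ClosedUnderP Ccl)
    (hBased : CBased T (InHSP Acl) Ccl) {Bcl : ClassOf L} (hBS : ClosedUnderS Bcl)
    (hBP : ClosedUnderP Bcl) (hBA : ∀ X iX, Bcl X iX → InHSP Acl X iX) :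
    SatisfiesSB T Bcl Ccl := by
  intro κ K iK _ C iC ε hC P iP η _ χ hχ hχε c
  obtain ⟨t, rfl⟩ := hC.exists_term hBS hBP c
  obtain ⟨Fa, iFa, xg, hFa, -⟩ := exists_isFreeOverB Acl hAS hAP ((k : κ) × K k)
  obtain ⟨β, s, ι, u, hs⟩ := hS.exists_reduct_term hAS hAP hCS hCP
    (fun X iX h => hBased X iX (mem_InHSP h)) hFa (@Term.realize _ _ iFa _ xg t)
  obtain ⟨φ, hφ, hφxg⟩ := hFa.exists_hom_of_InHSP hAS hAP (hBA C iC hC.1) fun p => ε p.1 p.2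
  let b : ∀ j, K (ι j).1 := fun j => @Term.realize _ _ (iK _) _ (fun _ => (ι j).2) (u j)
  refine ⟨@Term.realize _ _ iP _ (fun j => η (ι j).1 (b j)) s, ?_⟩
  have hb : ∀ j, χ (η (ι j).1 (b j)) = φ (@Term.realize _ _ iFa _ (fun _ => xg (ι j)) (u j)) :=
    fun j => calc
      χ (η (ι j).1 (b j)) = ε (ι j).1 (b j) := congrFun (hχε _) _
      _ = @Term.realize _ _ iC _ ((fun p => ε p.1 p.2) ∘ fun _ => ι j) (u j) :=
        IsAlgHomOn.realize_term (hC.2.1 _) _ _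
      _ = @Term.realize _ _ iC _ ((φ ∘ xg) ∘ fun _ => ι j) (u j) := by rw [hφxg]
      _ = _ := (hφ.realize_term _ _).symm
  calc χ (@Term.realize _ _ iP _ (fun j => η (ι j).1 (b j)) s)
      = @Term.realize _ _ (reduct T C iC) _ (fun j => χ (η (ι j).1 (b j))) s :=
        hχ.realize_term _ s
    _ = @Term.realize _ _ (reduct T C iC) _
          (φ ∘ fun j => @Term.realize _ _ iFa _ (fun _ => xg (ι j)) (u j)) s :=
        congrArg (fun v => @Term.realize _ _ (reduct T C iC) _ v s) (funext hb)
    _ = φ (@Term.realize _ _ iFa _ xg t) := by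
      rw [hs, IsAlgHomOn.realize_term (IsAlgHomOn.reduct T hφ)]
    _ = _ := by rw [hφ.realize_term, hφxg]

theorem satisfiesS_extends_between_free_and_variety_general
    (L L' : FirstOrder.Language.{0,0}) [L'.IsAlgebraic]
    (T : TermTranslation L L')
    (Acl : ClassOf L) (Ccl : ClassOf L')
    (hA : IsPrevariety Acl) (hC : IsPrevariety Ccl)
    (hBased : CBased T (InHSP Acl) Ccl) :
    SatisfiesSB T Acl Ccl ↔
      ∀ Bcl : ClassOf L, IsPrevariety Bcl →
        (∀ (F : Type) (iF : L.Structure F) (gen : ℕ → F),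
          IsFreeOverB Acl ℕ F iF gen →
          ∀ (X : Type) (iX : L.Structure X), ISPb1 F iF X iX → Bcl X iX) →
        (∀ (X : Type) (iX : L.Structure X), Bcl X iX → InHSP Acl X iX) →
        SatisfiesSB T Bcl Ccl := by
  refine ⟨fun hS Bcl hB _ hBA =>
    hS.of_subset_InHSP hA.2.1 hA.2.2 hC.2.1 hC.2.2 hBased hB.2.1 hB.2.2 hBA, fun h => ?_⟩
  exact h Acl hA (fun _ _ _ hF _ _ => ISPb1.mem hA.2.1 hA.2.2 hF.1) fun _ _ => mem_InHSP

/-- Let `A` and `C` be prevarieties such that the variety `V(A)` generated by `A` is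
`C`-based.  Then the following are equivalent:
(1) `U_{A,C}` satisfies (S);
(2) `U_{B,C}` satisfies (S) for each prevariety `B` with
`ISP(Free_A(ℵ₀)) ⊆ B ⊆ V(A)`. -/
theorem satisfiesS_extends_between_free_and_variety
    (L L' : FirstOrder.Language.{0,0}) [L.IsAlgebraic] [L'.IsAlgebraic]
    (T : TermTranslation L L')
    (Acl : ClassOf L) (Ccl : ClassOf L')
    (hA : IsPrevariety Acl) (hC : IsPrevariety Ccl)
    (hBased : CBased T (InHSP Acl) Ccl) :
    SatisfiesSB T Acl Ccl ↔
      ∀ Bcl : ClassOf L, IsPrevariety Bcl →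
        (∀ (F : Type) (iF : L.Structure F) (gen : ℕ → F),
          IsFreeOverB Acl ℕ F iF gen →
          ∀ (X : Type) (iX : L.Structure X), ISPb1 F iF X iX → Bcl X iX) →
        (∀ (X : Type) (iX : L.Structure X), Bcl X iX → InHSP Acl X iX) →
        SatisfiesSB T Bcl Ccl :=
  satisfiesS_extends_between_free_and_variety_general L L' T Acl Ccl hA hC hBased

end CoproductsPaper
end

section
/- Let A and C be prevarieties such that A is C-based. Then U_{A,C} satisfies (S) if and only if U_{A',C} satisfies (S) for every prevariety A' ⊆ A. -/
open FirstOrder FirstOrder.Language FirstOrder.Language.Structure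

namespace CoproductsPaper

variable {L L' : FirstOrder.Language.{0,0}}

-- AUX START
theorem isAlgHomOn_id {X : Type} (iX : L.Structure X) : IsAlgHomOn iX iX id := by
  intro n g v; rfl

theorem IsAlgHomOn.comp' {X Y Z : Type} {iX : L.Structure X} {iY : L.Structure Y}
    {iZ : L.Structure Z} {f : X → Y} {g : Y → Z}
    (hf : IsAlgHomOn iX iY f) (hg : IsAlgHomOn iY iZ g) :
    IsAlgHomOn iX iZ (g ∘ f) := by
  intro n s v
  show g (f (@funMap L X iX n s v)) = _
  rw [hf s v, hg s (f ∘ v)]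
  rfl

theorem realize_comm {X Y : Type} {iX : L.Structure X} {iY : L.Structure Y}
    {f : X → Y} (hf : IsAlgHomOn iX iY f) {α : Type} (t : L.Term α) (v : α → X) :
    f (@Term.realize L X iX α v t) = @Term.realize L Y iY α (f ∘ v) t := by
  induction t with
  | var => rfl
  | func s a ih =>
    show f (@funMap L X iX _ s fun i => @Term.realize L X iX α v (a i)) = _
    rw [hf s _]
    show @funMap L Y iY _ s _ = @funMap L Y iY _ s _
    congr 1
    funext j
    exact ih j

def subStructure {X : Type} (iX : L.Structure X) (S : Set X)
    (hS : ∀ (n : ℕ) (g : L.Functions n) (v : Fin n → X),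
      (∀ j, v j ∈ S) → @funMap L X iX n g v ∈ S) :
    L.Structure {x : X // x ∈ S} where
  funMap {n} g v := ⟨@funMap L X iX n g (fun j => (v j).1), hS n g _ (fun j => (v j).2)⟩
  RelMap {n} _ _ := False

theorem subStructure_incl_hom {X : Type} (iX : L.Structure X) (S : Set X)
    (hS : ∀ (n : ℕ) (g : L.Functions n) (v : Fin n → X),
      (∀ j, v j ∈ S) → @funMap L X iX n g v ∈ S) :
    IsAlgHomOn (subStructure iX S hS) iX (fun x => x.1) := by
  intro n g v; rfl

def termStructure (G : Type) : L.Structure (L.Term G) where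
  funMap {n} g v := Term.func g v
  RelMap {n} _ _ := False

theorem eval_hom {B : Type} (iB : L.Structure B) {G : Type} (v : G → B) :
    IsAlgHomOn (termStructure G) iB (fun t => @Term.realize L B iB G v t) := by
  intro n g a; rfl

theorem term_hom_ext {B : Type} {iB : L.Structure B} {G : Type}
    {h1 h2 : L.Term G → B}
    (hh1 : IsAlgHomOn (termStructure G) iB h1)
    (hh2 : IsAlgHomOn (termStructure G) iB h2)
    (hvar : ∀ g, h1 (Term.var g) = h2 (Term.var g)) : ∀ t, h1 t = h2 t := by
  intro t
  induction t with
  | var g => exact hvar g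
  | func s a ih =>
    have e1 := hh1 s a
    have e2 := hh2 s a
    show h1 (Term.func s a) = h2 (Term.func s a)
    calc h1 (Term.func s a) = @funMap L B iB _ s (h1 ∘ a) := e1
      _ = @funMap L B iB _ s (h2 ∘ a) := by
          congr 1; funext j; exact ih j
      _ = h2 (Term.func s a) := e2.symm

theorem reduct_hom [L'.IsAlgebraic] (T : TermTranslation L L') {X Y : Type}
    {iX : L.Structure X} {iY : L.Structure Y} {f : X → Y}
    (hf : IsAlgHomOn iX iY f) :
    IsAlgHomOn (reduct T X iX) (reduct T Y iY) f := by
  intro n s v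
  show f (@Term.realize L X iX (Fin n) v (T.onFun s)) = _
  exact realize_comm hf _ v

/-- The coproduct construction inside a prevariety. -/
theorem exists_coprod (Acl : ClassOf L) (hA : IsPrevariety Acl)
    {κ : Type} (K : κ → Type) (iK : ∀ k, L.Structure (K k))
    (hK : ∀ k, Acl (K k) (iK k)) :
    ∃ (C : Type) (iC : L.Structure C) (ε : ∀ k, K k → C),
      IsCoprodB Acl K iK C iC ε := by
  classical
  -- the term algebra on the disjoint union of the K k
  set G : Type := (k : κ) × K k with hG
  set Tm : Type := L.Term G with hTm
  set iTm : L.Structure Tm := termStructure G with hiTm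
  -- candidate quotients
  let Idx : Type := Σ s : Setoid Tm,
    { iQ : L.Structure (Quotient s) //
      Acl (Quotient s) iQ ∧
      IsAlgHomOn iTm iQ (Quotient.mk s) ∧
      ∀ k, IsAlgHomOn (iK k) iQ (fun x => Quotient.mk s (Term.var ⟨k, x⟩)) }
  let Qc : Idx → Type := fun i => Quotient i.1
  let iQc : ∀ i, L.Structure (Qc i) := fun i => i.2.1
  let Pi : Type := ∀ i, Qc i
  let iPi : L.Structure Pi := @piStructure L Idx Qc iQc
  let Φ : Tm → Pi := fun t i => Quotient.mk i.1 t
  have hΦ : IsAlgHomOn iTm iPi Φ := by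
    intro n g v
    funext i
    exact i.2.2.2.1 g v
  set S : Set Pi := Set.range Φ with hSdef
  have hSclosed : ∀ (n : ℕ) (g : L.Functions n) (v : Fin n → Pi),
      (∀ j, v j ∈ S) → @funMap L Pi iPi n g v ∈ S := by
    intro n g v hv
    choose t ht using hv
    refine ⟨Term.func g t, ?_⟩
    calc Φ (Term.func g t) = @funMap L Pi iPi n g (Φ ∘ t) := hΦ g t
      _ = @funMap L Pi iPi n g v := by
          congr 1; funext j; exact ht j
  let C : Type := {x : Pi // x ∈ S}
  let iC : L.Structure C := subStructure iPi S hSclosed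
  let ε : ∀ k, K k → C := fun k x => ⟨Φ (Term.var ⟨k, x⟩), ⟨Term.var ⟨k, x⟩, rfl⟩⟩
  have hε : ∀ k, IsAlgHomOn (iK k) iC (ε k) := by
    intro k n g v
    apply Subtype.ext
    funext i
    exact i.2.2.2.2 k g v
  have hCA : Acl C iC := by
    have hPiA : Acl Pi iPi := hA.2.2 Idx Qc iQc (fun i => i.2.2.1)
    exact hA.2.1 Pi iPi hPiA C iC (fun x => x.1)
      (subStructure_incl_hom iPi S hSclosed) Subtype.val_injective
  refine ⟨C, iC, ε, hCA, hε, ?_⟩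
  intro B iB hB f hf
  -- evaluation from the term algebra
  let e : Tm → B := fun t => @Term.realize L B iB G (fun g => f g.1 g.2) t
  have he : IsAlgHomOn iTm iB e := eval_hom iB _
  let s : Setoid Tm := ⟨fun a b => e a = e b, ⟨fun _ => rfl, Eq.symm, Eq.trans⟩⟩
  let ebar : Quotient s → B := Quotient.lift e (fun _ _ h => h)
  have hebar_inj : Function.Injective ebar := by
    intro a b
    refine Quotient.inductionOn₂ a b ?_
    intro t1 t2 h
    exact Quotient.sound h
  let iQ : L.Structure (Quotient s) :=
    { funMap := fun {n} g v =>
        Quotient.mk s (Term.func g (fun j => (Quotient.exists_rep (v j)).choose)),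
      RelMap := fun {n} _ _ => False }
  have hebar_hom : IsAlgHomOn iQ iB ebar := by
    intro n g v
    show e (Term.func g _) = _
    calc e (Term.func g (fun j => (Quotient.exists_rep (v j)).choose))
        = @funMap L B iB n g (e ∘ (fun j => (Quotient.exists_rep (v j)).choose)) :=
          he g _
      _ = @funMap L B iB n g (ebar ∘ v) := by
          congr 1; funext j
          show e ((Quotient.exists_rep (v j)).choose) = ebar (v j)
          have hsp : Quotient.mk s ((Quotient.exists_rep (v j)).choose) = v j :=
            (Quotient.exists_rep (v j)).choose_spec
          calc e ((Quotient.exists_rep (v j)).choose)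
              = ebar (Quotient.mk s ((Quotient.exists_rep (v j)).choose)) := rfl
            _ = ebar (v j) := congrArg ebar hsp
  have hmk_hom : IsAlgHomOn iTm iQ (Quotient.mk s) := by
    intro n g v
    apply hebar_inj
    rw [hebar_hom g _]
    show e (@funMap L Tm iTm n g v) = _
    rw [he g v]
    rfl
  have hvark : ∀ k, IsAlgHomOn (iK k) iQ
      (fun x => Quotient.mk s (Term.var ⟨k, x⟩)) := by
    intro k n g v
    apply hebar_inj
    rw [hebar_hom g _]
    show e (Term.var ⟨k, @funMap L (K k) (iK k) n g v⟩) = _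
    show f k (@funMap L (K k) (iK k) n g v) = _
    rw [hf k g v]
    rfl
  have hQA : Acl (Quotient s) iQ := hA.2.1 B iB hB _ iQ ebar hebar_hom hebar_inj
  let i0 : Idx := ⟨s, ⟨iQ, hQA, hmk_hom, hvark⟩⟩
  let pr : C → Quotient s := fun c => c.1 i0
  have hpr : IsAlgHomOn iC iQ pr := by
    intro n g v; rfl
  let h : C → B := fun c => ebar (pr c)
  have hh : IsAlgHomOn iC iB h := IsAlgHomOn.comp' hpr hebar_hom
  have hcomm : ∀ k, h ∘ ε k = f k := by
    intro k; funext x; rfl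
  refine ⟨h, ⟨hh, hcomm⟩, ?_⟩
  rintro h' ⟨hh', hcomm'⟩
  funext c
  -- both h' and h are determined on the image of Φ
  have key : ∀ t : Tm, h' ⟨Φ t, ⟨t, rfl⟩⟩ = h ⟨Φ t, ⟨t, rfl⟩⟩ := by
    have lift_hom : ∀ (u : C → B), IsAlgHomOn iC iB u →
        IsAlgHomOn iTm iB (fun t => u ⟨Φ t, ⟨t, rfl⟩⟩) := by
      intro u hu n g a
      have harg : (⟨Φ (@funMap L Tm iTm n g a), ⟨@funMap L Tm iTm n g a, rfl⟩⟩ : C)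
          = @funMap L C iC n g (fun j => ⟨Φ (a j), ⟨a j, rfl⟩⟩) := by
        apply Subtype.ext
        exact hΦ g a
      show u _ = _
      rw [harg, hu g _]
      rfl
    intro t
    exact term_hom_ext (h1 := fun t => h' ⟨Φ t, ⟨t, rfl⟩⟩)
      (h2 := fun t => h ⟨Φ t, ⟨t, rfl⟩⟩)
      (lift_hom h' hh') (lift_hom h hh)
      (fun g => by
        show h' (ε g.1 g.2) = h (ε g.1 g.2)
        exact (congrFun (hcomm' g.1) g.2).trans
          (congrFun (hcomm g.1) g.2).symm) t
  obtain ⟨x, hx⟩ := c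
  obtain ⟨t, rfl⟩ := hx
  exact key t

/-- Let `A` and `C` be prevarieties such that `A` is `C`-based.  Then `U_{A,C}` satisfies
(S) if and only if `U_{A',C}` satisfies (S) for every prevariety `A' ⊆ A`. -/
theorem satisfiesS_hereditary
    (L L' : FirstOrder.Language.{0,0}) [L.IsAlgebraic] [L'.IsAlgebraic]
    (T : TermTranslation L L')
    (Acl : ClassOf L) (Ccl : ClassOf L')
    (hA : IsPrevariety Acl) (hC : IsPrevariety Ccl)
    (hBased : CBased T Acl Ccl) :
    SatisfiesSB T Acl Ccl ↔
      ∀ Acl' : ClassOf L, IsPrevariety Acl' →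
        (∀ (X : Type) (iX : L.Structure X), Acl' X iX → Acl X iX) →
        SatisfiesSB T Acl' Ccl := by
  constructor
  · intro hS Acl' hA' hsub
    intro κ K iK hK C' iC' ε' hcop' P iP η hcopP χ' hχ' hcomm'
    obtain ⟨C, iC, ε, hcop⟩ := exists_coprod Acl hA K iK (fun k => hsub _ _ (hK k))
    obtain ⟨hCA, hε, hUP⟩ := hcop
    obtain ⟨χ, ⟨hχhom, hχcomm⟩, -⟩ :=
      hcopP.2.2 C (reduct T C iC) (hBased C iC hCA) (fun k => ε k)
        (fun k => reduct_hom T (hε k))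
    have hC'A : Acl C' iC' := hsub C' iC' hcop'.1
    obtain ⟨h, ⟨hhhom, hhcomm⟩, -⟩ := hUP C' iC' hC'A ε' hcop'.2.1
    obtain ⟨u, hu, huniq⟩ :=
      hcopP.2.2 C' (reduct T C' iC') (hBased C' iC' hC'A) (fun k => ε' k)
        (fun k => reduct_hom T (hcop'.2.1 k))
    have h1 : χ' = u := huniq χ' ⟨hχ', hcomm'⟩
    have h2 : h ∘ χ = u := by
      refine huniq (h ∘ χ) ⟨IsAlgHomOn.comp' hχhom (reduct_hom T hhhom), ?_⟩
      intro k
      funext x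
      show h (χ (η k x)) = ε' k x
      calc h (χ (η k x)) = h (ε k x) := congrArg h (congrFun (hχcomm k) x)
        _ = ε' k x := congrFun (hhcomm k) x
    have hχ'eq : χ' = h ∘ χ := h1.trans h2.symm
    have hχsurj : Function.Surjective χ :=
      hS κ K iK (fun k => hsub _ _ (hK k)) C iC ε ⟨hCA, hε, hUP⟩ P iP η hcopP
        χ hχhom hχcomm
    have hhsurj : Function.Surjective h := by
      have hclosed : ∀ (n : ℕ) (g : L.Functions n) (v : Fin n → C'),
          (∀ j, v j ∈ Set.range h) → @funMap L C' iC' n g v ∈ Set.range h := by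
        intro n g v hv
        choose c hc using hv
        refine ⟨@funMap L C iC n g c, ?_⟩
        rw [hhhom g c]
        congr 1
        funext j
        exact hc j
      let Sg : Set C' := Set.range h
      let iS : L.Structure {x : C' // x ∈ Sg} := subStructure iC' Sg hclosed
      have hSA : Acl' {x : C' // x ∈ Sg} iS :=
        hA'.2.1 C' iC' hcop'.1 _ iS (fun x => x.1)
          (subStructure_incl_hom iC' Sg hclosed) Subtype.val_injective
      have hrange : ∀ k x, ε' k x ∈ Sg := fun k x => ⟨ε k x, congrFun (hhcomm k) x⟩
      have hε'' : ∀ k, IsAlgHomOn (iK k) iS (fun x => (⟨ε' k x, hrange k x⟩ :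
          {x : C' // x ∈ Sg})) := by
        intro k n g v
        apply Subtype.ext
        exact hcop'.2.1 k g v
      obtain ⟨w, ⟨hwhom, hwcomm⟩, -⟩ :=
        hcop'.2.2 _ iS hSA (fun k x => ⟨ε' k x, hrange k x⟩) hε''
      obtain ⟨z, hz, hzuniq⟩ := hcop'.2.2 C' iC' hcop'.1 ε' hcop'.2.1
      have e1 : (fun c => (w c).1) = z := by
        refine hzuniq _ ⟨IsAlgHomOn.comp' hwhom (subStructure_incl_hom iC' Sg hclosed), ?_⟩
        intro k
        funext x
        show (w (ε' k x)).1 = ε' k x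
        exact congrArg Subtype.val (congrFun (hwcomm k) x)
      have e2 : id = z := hzuniq id ⟨isAlgHomOn_id iC', fun k => rfl⟩
      have e3 : (fun c => (w c).1) = id := e1.trans e2.symm
      intro c'
      obtain ⟨c, hc⟩ := (w c').2
      exact ⟨c, hc.trans (congrFun e3 c')⟩
    rw [hχ'eq]
    exact hhsurj.comp hχsurj
  · intro H
    exact H Acl hA (fun _ _ hx => hx)

end CoproductsPaper
end

section
/- The forgetful functor U_DM from the variety DM of De Morgan algebras to the category D of bounded distributive lattices preserves coproducts: for every set K of De Morgan algebras with coproduct co-cone {ε_B : B → ∐_DM K}, the co-cone {U_DM(ε_B)} exhibits U_DM(∐_DM K) as the coproduct of {U_DM(B) : B in K} in D; equivalently, the canonical comparison D-homomorphism χ_K : ∐_D U_DM(K) → U_DM(∐_DM K) is an isomorphism. -/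
namespace CoproductsPaper

/-- `neg` makes the bounded distributive lattice `A` into a De Morgan algebra. -/
def IsDeMorgan (A : Type) [DistribLattice A] [BoundedOrder A] (neg : A → A) : Prop :=
  (∀ a : A, neg (neg a) = a) ∧ (∀ a b : A, neg (a ⊓ b) = neg a ⊔ neg b) ∧
    neg (⊥ : A) = ⊤

/-- A homomorphism of De Morgan algebras. -/
def IsDMHom {A B : Type} [DistribLattice A] [BoundedOrder A]
    [DistribLattice B] [BoundedOrder B] (negA : A → A) (negB : B → B)
    (h : A → B) : Prop :=
  (∀ a b : A, h (a ⊓ b) = h a ⊓ h b) ∧ (∀ a b : A, h (a ⊔ b) = h a ⊔ h b) ∧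
    h (⊥ : A) = ⊥ ∧ h (⊤ : A) = ⊤ ∧ ∀ a : A, h (negA a) = negB (h a)

/-- A morphism of `D`, i.e. a bound-preserving lattice homomorphism. -/
def IsBLHom {A B : Type} [DistribLattice A] [BoundedOrder A]
    [DistribLattice B] [BoundedOrder B] (h : A → B) : Prop :=
  (∀ a b : A, h (a ⊓ b) = h a ⊓ h b) ∧ (∀ a b : A, h (a ⊔ b) = h a ⊔ h b) ∧
    h (⊥ : A) = ⊥ ∧ h (⊤ : A) = ⊤

/-- `(C, ε)` is a coproduct co-cone in the variety `DM` of De Morgan algebras for the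
family `K` (with negations `negK`). -/
def IsDMCoproduct {κ : Type} (K : κ → Type) [∀ k, DistribLattice (K k)]
    [∀ k, BoundedOrder (K k)] (negK : ∀ k, K k → K k)
    (C : Type) [DistribLattice C] [BoundedOrder C] (negC : C → C)
    (ε : ∀ k, K k → C) : Prop :=
  IsDeMorgan C negC ∧ (∀ k, IsDMHom (negK k) negC (ε k)) ∧
  ∀ (B : Type) [DistribLattice B] [BoundedOrder B] (negB : B → B),
    IsDeMorgan B negB →
    ∀ g : ∀ k, K k → B, (∀ k, IsDMHom (negK k) negB (g k)) →
      ∃! h : C → B, IsDMHom negC negB h ∧ ∀ k, h ∘ ε k = g k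

/-- Derived De Morgan laws. -/
theorem IsDeMorgan.sup {A : Type} [DistribLattice A] [BoundedOrder A] {neg : A → A}
    (h : IsDeMorgan A neg) : ∀ a b : A, neg (a ⊔ b) = neg a ⊓ neg b := by
  intro a b
  obtain ⟨h2, hm, -⟩ := h
  have := hm (neg a) (neg b)
  rw [h2, h2] at this
  rw [← this, h2]

theorem IsDeMorgan.top {A : Type} [DistribLattice A] [BoundedOrder A] {neg : A → A}
    (h : IsDeMorgan A neg) : neg (⊤ : A) = ⊥ := by
  have := congrArg neg h.2.2
  rw [h.1] at this
  exact this.symm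

/-- The forgetful functor `U_DM` from the variety `DM` of De Morgan algebras to the
category `D` of bounded distributive lattices preserves coproducts: for every set `K`
of De Morgan algebras with coproduct co-cone `{ε_B : B → ∐_DM K}`, the co-cone
`{U_DM(ε_B)}` exhibits `U_DM(∐_DM K)` as the coproduct of `{U_DM(B) : B ∈ K}` in `D`;
that is, for every bounded distributive lattice `Q` and all `D`-morphisms
`g_B : U_DM(B) → Q` there is a unique `D`-morphism `h : U_DM(∐_DM K) → Q` with
`h ∘ U_DM(ε_B) = g_B` for all `B ∈ K` (equivalently, the canonical comparison
`D`-homomorphism `χ_K : ∐_D U_DM(K) → U_DM(∐_DM K)` is an isomorphism). -/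
theorem deMorgan_forgetful_preserves_coproducts
    (κ : Type) (K : κ → Type) [∀ k, DistribLattice (K k)] [∀ k, BoundedOrder (K k)]
    (negK : ∀ k, K k → K k) (hK : ∀ k, IsDeMorgan (K k) (negK k))
    (C : Type) [DistribLattice C] [BoundedOrder C] (negC : C → C)
    (ε : ∀ k, K k → C)
    (hcop : IsDMCoproduct K negK C negC ε) :
    ∀ (Q : Type) [DistribLattice Q] [BoundedOrder Q] (g : ∀ k, K k → Q),
      (∀ k, IsBLHom (g k)) →
        ∃! h : C → Q, IsBLHom h ∧ ∀ k, h ∘ ε k = g k := by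
  obtain ⟨hC, hε, huniv⟩ := hcop
  intro Q _ _ g hg
  -- The De Morgan algebra `Q × Qᵒᵈ` with swap negation
  set negB : Q × Qᵒᵈ → Q × Qᵒᵈ :=
    fun p => (OrderDual.ofDual p.2, OrderDual.toDual p.1) with hnegB
  have hBdm : IsDeMorgan (Q × Qᵒᵈ) negB := ⟨fun _ => rfl, fun _ _ => rfl, rfl⟩
  -- Lift `g` to DM-homs into `Q × Qᵒᵈ`
  set ghat : ∀ k, K k → Q × Qᵒᵈ :=
    fun k a => (g k a, OrderDual.toDual (g k (negK k a))) with hghat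
  have hghathom : ∀ k, IsDMHom (negK k) negB (ghat k) := by
    intro k
    obtain ⟨hm, hj, hb, ht⟩ := hg k
    refine ⟨?_, ?_, ?_, ?_, ?_⟩
    · intro a b
      have : negK k (a ⊓ b) = negK k a ⊔ negK k b := (hK k).2.1 a b
      simp [hghat, hm, hj, this, Prod.ext_iff]
    · intro a b
      have : negK k (a ⊔ b) = negK k a ⊓ negK k b := (hK k).sup a b
      simp [hghat, hm, hj, this, Prod.ext_iff]
    · have hnb : negK k (⊥ : K k) = ⊤ := (hK k).2.2
      simp only [hghat, hnb, hb, ht]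
      rfl
    · have hnt : negK k (⊤ : K k) = ⊥ := (hK k).top
      simp only [hghat, hnt, hb, ht]
      rfl
    · intro a
      simp [hghat, hnegB, (hK k).1, Prod.ext_iff]
  obtain ⟨H, ⟨hHhom, hHcomm⟩, hHuniq⟩ :=
    huniv (Q × Qᵒᵈ) negB hBdm ghat hghathom
  refine ⟨fun c => (H c).1, ⟨⟨?_, ?_, ?_, ?_⟩, ?_⟩, ?_⟩
  · intro a b; exact congrArg Prod.fst (hHhom.1 a b)
  · intro a b; exact congrArg Prod.fst (hHhom.2.1 a b)
  · exact congrArg Prod.fst hHhom.2.2.1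
  · exact congrArg Prod.fst hHhom.2.2.2.1
  · intro k
    funext a
    have := congrFun (hHcomm k) a
    simpa [hghat] using congrArg Prod.fst this
  · rintro h' ⟨⟨hm', hj', hb', ht'⟩, hcomm'⟩
    -- Build the DM-hom `H' : C → Q × Qᵒᵈ` from `h'`
    set H' : C → Q × Qᵒᵈ := fun c => (h' c, OrderDual.toDual (h' (negC c))) with hH'
    have hH'hom : IsDMHom negC negB H' := by
      refine ⟨?_, ?_, ?_, ?_, ?_⟩
      · intro a b
        have : negC (a ⊓ b) = negC a ⊔ negC b := hC.2.1 a b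
        simp [hH', hm', hj', this, Prod.ext_iff]
      · intro a b
        have : negC (a ⊔ b) = negC a ⊓ negC b := hC.sup a b
        simp [hH', hm', hj', this, Prod.ext_iff]
      · have hnb : negC (⊥ : C) = ⊤ := hC.2.2
        simp only [hH', hnb, hb', ht']
        rfl
      · have hnt : negC (⊤ : C) = ⊥ := hC.top
        simp only [hH', hnt, hb', ht']
        rfl
      · intro a
        simp [hH', hnegB, hC.1, Prod.ext_iff]
    have hH'comm : ∀ k, H' ∘ ε k = ghat k := by
      intro k
      funext a
      have h1 : h' (ε k a) = g k a := congrFun (hcomm' k) a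
      have h2 : negC (ε k a) = ε k (negK k a) := ((hε k).2.2.2.2 a).symm
      have h3 : h' (ε k (negK k a)) = g k (negK k a) := congrFun (hcomm' k) (negK k a)
      simp [hH', hghat, h1, h2, h3]
    have : H' = H := hHuniq H' ⟨hH'hom, hH'comm⟩
    funext c
    exact congrArg Prod.fst (congrFun this c)


end CoproductsPaper
end
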